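/- Let H be a complex Hilbert space and A a von Neumann algebra on H whose commutant C = A' is abelian. Fix ξ ∈ H and let E be the orthogonal projection onto the closure of {Bξ : B ∈ C}. Let X be a bounded positive operator on H (⟨v, Xv⟩ ≥ 0 for all v ∈ H) commuting with every element of C. Then for every A ∈ A the inner product ⟨Aξ, A(E X ξ)⟩ is a nonnegative real number. (This shows that the conditional expectation defined by ε(X)Aξ = A E X ξ is a positive map.) -/

import Mathlib

open scoped ComplexInnerProductSpace ComplexOrder

/-- The orthogonal projection of `H` onto the closure of the subspace spanned by `S`,
viewed as a bounded operator on `H`. -/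
noncomputable def projCl {H : Type*} [NormedAddCommGroup H] [InnerProductSpace ℂ H]
    [CompleteSpace H] (S : Set H) : H →L[ℂ] H :=
  haveI : CompleteSpace ((Submodule.span ℂ S).topologicalClosure) :=
    ((Submodule.span ℂ S).isClosed_topologicalClosure).completeSpace_coe
  ((Submodule.span ℂ S).topologicalClosure).subtypeL.comp
    (Submodule.orthogonalProjectionOnto ((Submodule.span ℂ S).topologicalClosure))

/-- The orthogonal projection `E` onto the closure of `{Bξ : B ∈ A'}`, where `A'` is the
commutant of the von Neumann algebra `A`. -/
noncomputable def cyclicProj {H : Type*} [NormedAddCommGroup H] [InnerProductSpace ℂ H]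
    [CompleteSpace H] (A : VonNeumannAlgebra H) (ξ : H) : H →L[ℂ] H :=
  projCl ((fun B : H →L[ℂ] H => B ξ) '' (A.commutant : Set (H →L[ℂ] H)))

/-! With `K` the closure of `A'ξ` and `E` its projection, `K` is invariant under the
*-algebra `A'`, so `E ∈ A'' = A`. Put `T = E a* a E ≥ 0` and `G = √T`: then `G` commutes with
`A'` and with `E`, so `Gξ ∈ K`, and `⟪aξ, a E X ξ⟫ = ⟪G Gξ, Xξ⟫`. Approximate `Gξ` by `Bₙξ`
with `Bₙ ∈ A'`. As `A'` is abelian, `Bₙ - G` is normal, so `‖Bₙ*ξ - Gξ‖ = ‖Bₙξ - Gξ‖` and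
`Bₙ*ξ → Gξ` too; moving `Bₙ` across the inner product and past `X` then gives
`⟪G Gξ, Xξ⟫ = ⟪Gξ, X Gξ⟫ ≥ 0`. -/

open Filter Topology

lemma IsIdempotentElem.commute_mul_mul {S : Type*} [Semigroup S] {p : S}
    (hp : IsIdempotentElem p) (s : S) : Commute p (p * s * p) := by
  simp only [Commute, SemiconjBy, ← mul_assoc, hp.eq]
  simp only [mul_assoc, hp.eq]

section Projection

variable {𝕜 E : Type*} [RCLike 𝕜] [NormedAddCommGroup E] [InnerProductSpace 𝕜 E] [CompleteSpace E]

lemma Submodule.commute_starProjection_of_forall_mem {U : Submodule 𝕜 E}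
    [U.HasOrthogonalProjection] {T : E →L[𝕜] E} (hT : ∀ v ∈ U, T v ∈ U)
    (hT' : ∀ v ∈ U, ContinuousLinearMap.adjoint T v ∈ U) :
    Commute U.starProjection T := by
  have hconj : ∀ S : E →L[𝕜] E, (∀ v ∈ U, S v ∈ U) →
      U.starProjection * S * U.starProjection = S * U.starProjection := fun S hS =>
    ContinuousLinearMap.ext fun v =>
      U.starProjection_eq_self_iff.mpr (hS _ (U.starProjection_apply_mem v))
  have hstar := congrArg star (hconj _ hT')
  simp only [star_mul, (isSelfAdjoint_starProjection U).star_eq,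
    ← ContinuousLinearMap.star_eq_adjoint, star_star, ← mul_assoc] at hstar
  exact hstar.symm.trans (hconj T hT)

lemma ContinuousLinearMap.norm_star_apply_sub_eq {B G : E →L[𝕜] E} [IsStarNormal B]
    (hG : IsSelfAdjoint G) (hBG : Commute B G) (v : E) :
    ‖star B v - G v‖ = ‖B v - G v‖ := by
  have : IsStarNormal G := hG.isStarNormal
  have hnormal : IsStarNormal (B - G) := (hG.star_eq.symm ▸ hBG).isStarNormal_sub
  have := (isStarNormal_iff_norm_eq_adjoint.mp hnormal v).symm
  rwa [← star_eq_adjoint, star_sub, hG.star_eq] at this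

end Projection

section Cyclic

variable {𝕜 H : Type*} [RCLike 𝕜] [NormedAddCommGroup H] [InnerProductSpace 𝕜 H] [CompleteSpace H]

def cyclicSubspace (M : StarSubalgebra 𝕜 (H →L[𝕜] H)) (ξ : H) : Submodule 𝕜 H :=
  (Submodule.span 𝕜 ((fun B : H →L[𝕜] H => B ξ) '' M)).topologicalClosure

variable (M : StarSubalgebra 𝕜 (H →L[𝕜] H)) (ξ : H)

lemma coe_cyclicSubspace :
    (cyclicSubspace M ξ : Set H) = closure ((fun B : H →L[𝕜] H => B ξ) '' M) := by
  rw [cyclicSubspace, Submodule.topologicalClosure_coe]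
  congr 1
  exact congrArg SetLike.coe <| Submodule.span_eq <|
    (Subalgebra.toSubmodule M.toSubalgebra).map (ContinuousLinearMap.apply 𝕜 H ξ).toLinearMap

lemma apply_mem_cyclicSubspace {B : H →L[𝕜] H} (hB : B ∈ M) : B ξ ∈ cyclicSubspace M ξ :=
  Submodule.le_topologicalClosure _ (Submodule.subset_span ⟨B, hB, rfl⟩)

lemma self_mem_cyclicSubspace : ξ ∈ cyclicSubspace M ξ :=
  apply_mem_cyclicSubspace M ξ (one_mem M)

lemma apply_mem_cyclicSubspace_of_mem {B : H →L[𝕜] H} (hB : B ∈ M) {v : H}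
    (hv : v ∈ cyclicSubspace M ξ) : B v ∈ cyclicSubspace M ξ := by
  have hmaps : Set.MapsTo B ((fun B' : H →L[𝕜] H => B' ξ) '' M)
      ((fun B' : H →L[𝕜] H => B' ξ) '' M) := by
    rintro _ ⟨B', hB', rfl⟩
    exact ⟨B * B', mul_mem hB hB', rfl⟩
  rw [← SetLike.mem_coe, coe_cyclicSubspace] at hv ⊢
  exact hmaps.closure B.continuous hv

lemma exists_tendsto_apply_of_mem_cyclicSubspace {v : H} (hv : v ∈ cyclicSubspace M ξ) :
    ∃ B : ℕ → H →L[𝕜] H, (∀ n, B n ∈ M) ∧ Tendsto (fun n => B n ξ) atTop (𝓝 v) := by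
  rw [← SetLike.mem_coe, coe_cyclicSubspace] at hv
  obtain ⟨u, hu, hlim⟩ := mem_closure_iff_seq_limit.mp hv
  choose B hB hBu using hu
  exact ⟨B, hB, by simpa only [hBu] using hlim⟩

instance : CompleteSpace (cyclicSubspace M ξ) :=
  (Submodule.isClosed_topologicalClosure _).completeSpace_coe

lemma commute_starProjection_cyclicSubspace {B : H →L[𝕜] H} (hB : B ∈ M) :
    Commute (cyclicSubspace M ξ).starProjection B :=
  Submodule.commute_starProjection_of_forall_mem
    (fun _ => apply_mem_cyclicSubspace_of_mem M _ hB)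
    (fun _ => apply_mem_cyclicSubspace_of_mem M _ (star_mem hB))

variable {M ξ}

lemma tendsto_star_apply_of_tendsto_apply (hM : ∀ b₁ ∈ M, ∀ b₂ ∈ M, Commute b₁ b₂)
    {G : H →L[𝕜] H} (hG : IsSelfAdjoint G) (hGM : ∀ B ∈ M, Commute B G)
    {B : ℕ → H →L[𝕜] H} (hB : ∀ n, B n ∈ M)
    (hlim : Tendsto (fun n => B n ξ) atTop (𝓝 (G ξ))) :
    Tendsto (fun n => star (B n) ξ) atTop (𝓝 (G ξ)) := by
  have hnorm (n : ℕ) : ‖star (B n) ξ - G ξ‖ = ‖B n ξ - G ξ‖ :=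
    have : IsStarNormal (B n) := ⟨hM _ (star_mem (hB n)) _ (hB n)⟩
    ContinuousLinearMap.norm_star_apply_sub_eq hG (hGM _ (hB n)) ξ
  rw [tendsto_iff_norm_sub_tendsto_zero] at hlim ⊢
  simpa only [hnorm] using hlim

lemma inner_mul_self_apply_eq_of_mem_cyclicSubspace
    (hM : ∀ b₁ ∈ M, ∀ b₂ ∈ M, Commute b₁ b₂)
    {G : H →L[𝕜] H} (hG : IsSelfAdjoint G) (hGM : ∀ B ∈ M, Commute B G)
    (hGξ : G ξ ∈ cyclicSubspace M ξ) {X : H →L[𝕜] H} (hXM : ∀ B ∈ M, Commute B X) :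
    inner 𝕜 ((G * G) ξ) (X ξ) = inner 𝕜 (G ξ) (X (G ξ)) := by
  obtain ⟨B, hB, hlim⟩ := exists_tendsto_apply_of_mem_cyclicSubspace M ξ hGξ
  have hterm (n : ℕ) : inner 𝕜 (G (B n ξ)) (X ξ) = inner 𝕜 (G ξ) (X (star (B n) ξ)) := by
    rw [← mul_apply_eq_comp, ← (hGM _ (hB n)).eq, mul_apply_eq_comp,
      ← ContinuousLinearMap.adjoint_inner_right, ← ContinuousLinearMap.star_eq_adjoint,
      ← mul_apply_eq_comp, (hXM _ (star_mem (hB n))).eq, mul_apply_eq_comp]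
  have hlim₁ : Tendsto (fun n => inner 𝕜 (G (B n ξ)) (X ξ)) atTop
      (𝓝 (inner 𝕜 (G (G ξ)) (X ξ))) :=
    ((G.continuous.inner continuous_const).tendsto _).comp hlim
  have hlim₂ : Tendsto (fun n => inner 𝕜 (G (B n ξ)) (X ξ)) atTop
      (𝓝 (inner 𝕜 (G ξ) (X (G ξ)))) := by
    simp_rw [hterm]
    exact ((continuous_const.inner X.continuous).tendsto _).comp
      (tendsto_star_apply_of_tendsto_apply hM hG hGM hB hlim)
  exact tendsto_nhds_unique hlim₁ hlim₂

end Cyclic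

section VonNeumann

variable {H : Type*} [NormedAddCommGroup H] [InnerProductSpace ℂ H] [CompleteSpace H]

lemma cyclicProj_eq_starProjection (A : VonNeumannAlgebra H) (ξ : H) :
    cyclicProj A ξ = (cyclicSubspace A.commutant.toStarSubalgebra ξ).starProjection :=
  rfl

lemma starProjection_cyclicSubspace_commutant_mem (A : VonNeumannAlgebra H) (ξ : H) :
    (cyclicSubspace A.commutant.toStarSubalgebra ξ).starProjection ∈ A := by
  have h : _ ∈ A.commutant.commutant := VonNeumannAlgebra.mem_commutant_iff.mpr fun B hB =>
    (commute_starProjection_cyclicSubspace A.commutant.toStarSubalgebra ξ hB).symm.eq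
  rwa [A.commutant_commutant] at h

end VonNeumann

/-- (Positivity of the conditional expectation (3.5) in Theorem 3.) If the commutant
`C = A'` is abelian, `E` the orthogonal projection onto the closure of `{Bξ : B ∈ C}`,
and `X` a bounded positive operator commuting with every element of `C`, then for every
`A ∈ A` the inner product `⟨Aξ, A (E X ξ)⟩` is a nonnegative real number. -/
theorem cyclicProj_conditional_expectation_positive
    {H : Type*} [NormedAddCommGroup H] [InnerProductSpace ℂ H] [CompleteSpace H]
    (A : VonNeumannAlgebra H)
    (habelian : ∀ b₁ ∈ A.commutant, ∀ b₂ ∈ A.commutant, b₁ * b₂ = b₂ * b₁)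
    (ξ : H) (X : H →L[ℂ] H)
    (hXpos : ∀ v : H, 0 ≤ ⟪v, X v⟫)
    (hX : ∀ B ∈ A.commutant, X * B = B * X) :
    ∀ a ∈ A, 0 ≤ ⟪a ξ, a (cyclicProj A ξ (X ξ))⟫ := by
  intro a ha
  rw [cyclicProj_eq_starProjection]
  set C := A.commutant.toStarSubalgebra
  set E := (cyclicSubspace C ξ).starProjection
  have hEξ : E ξ = ξ := Submodule.starProjection_eq_self_iff.mpr (self_mem_cyclicSubspace C ξ)
  set T := E * (star a * a) * E
  have hTA : T ∈ A := by
    have hEA := starProjection_cyclicSubspace_commutant_mem A ξ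
    exact mul_mem (mul_mem hEA (mul_mem (star_mem ha) ha)) hEA
  set G := CFC.sqrt T
  have hGC : ∀ B ∈ C, Commute B G := fun B hB =>
    (Commute.cfcₙ_nnreal (VonNeumannAlgebra.mem_commutant_iff.mp hB T hTA) _).symm
  have hGE : Commute G E :=
    ((Submodule.isIdempotentElem_starProjection _).commute_mul_mul _).symm.cfcₙ_nnreal _
  have hGξ : G ξ ∈ cyclicSubspace C ξ := by
    rw [← Submodule.starProjection_eq_self_iff, ← mul_apply_eq_comp, ← hGE.eq,
      mul_apply_eq_comp, hEξ]
  have hGG : G * G = T := CFC.sqrt_mul_sqrt_self T <|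
    (isSelfAdjoint_starProjection _).conjugate_nonneg (star_mul_self_nonneg a)
  calc (0 : ℂ) ≤ ⟪G ξ, X (G ξ)⟫ := hXpos (G ξ)
    _ = ⟪(G * G) ξ, X ξ⟫ := (inner_mul_self_apply_eq_of_mem_cyclicSubspace habelian
          (CFC.sqrt_nonneg T).isSelfAdjoint hGC hGξ fun B hB => (hX B hB).symm).symm
    _ = ⟪a ξ, a (E (X ξ))⟫ := by
      rw [hGG, mul_apply_eq_comp, mul_apply_eq_comp, hEξ,
        Submodule.inner_starProjection_left_eq_right, mul_apply_eq_comp,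
        ContinuousLinearMap.star_eq_adjoint, ContinuousLinearMap.adjoint_inner_left]
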